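/- arXiv:1710.09771 — 2 statements merged into one kernel-verified Lean document; each statement's English description precedes it below -/
import Mathlib

section
/- Let 0 ≤ S < T < ∞ and x ∈ C([-τ,T],ℝ^d). Define x^S ∈ C([-τ,T-S],ℝ^d) by x^S(t) = x(S+t) for t ∈ [-τ,T-S]. Then I_T(x) = I_S(x|_{[-τ,S]}) + I_{T-S}(x^S) (with the convention ∞ + a = ∞). -/
/-!
Splitting a control `u ∈ U_T(x)` at time `S` gives `u|_{[0,S]} ∈ U_S(x|_{[-τ,S]})` and
`u(S + ·) ∈ U_{T-S}(x^S)`, because the segment `x_s` only sees `x` on `[s - τ, s]`, so the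
restricted and shifted paths have the same segments as `x` at the corresponding times, and the
integral equation on `[0,T]` is equivalent to the equation on `[0,S]` together with the equation
on `[S,T]` restarted at `x(S)`. Conversely, two such controls concatenate to a control in `U_T(x)`
(the value at the single time `S` is irrelevant). The cost `½∫|u|²` is additive under this
splitting, so the two infima add.
-/

open MeasureTheory Set Metric
open scoped ENNReal

noncomputable section

/-- `ℝ^d`. -/
abbrev Vec (d : ℕ) := EuclideanSpace ℝ (Fin d)

/-- The state space `𝐂 = C([-τ,0],ℝ^d)`. -/
abbrev Hist (τ : ℝ) (d : ℕ) := C(Icc (-τ) (0:ℝ), Vec d)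

/-- The path space `C([-τ,T],ℝ^d)`. -/
abbrev Traj (τ T : ℝ) (d : ℕ) := C(Icc (-τ) T, Vec d)

/-- Matrix acting on a vector. -/
def matVec {d m : ℕ} (M : Matrix (Fin d) (Fin m) ℝ) (v : Vec m) : Vec d :=
  WithLp.toLp 2 (fun i => ∑ j, M i j * v j)

/-- Squared Frobenius norm of a matrix. -/
def frobSq {d m : ℕ} (M : Matrix (Fin d) (Fin m) ℝ) : ℝ := ∑ i, ∑ j, (M i j) ^ 2

/-- Frobenius norm of a matrix. -/
def frobNorm {d m : ℕ} (M : Matrix (Fin d) (Fin m) ℝ) : ℝ := Real.sqrt (frobSq M)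

/-- Evaluation of a path at a time `t ∈ [-τ,T]` (clamped). -/
def ev {d : ℕ} {τ T : ℝ} (h : -τ ≤ T) (x : Traj τ T d) (t : ℝ) : Vec d :=
  x (projIcc (-τ) T h t)

/-- The history segment `x_t ∈ 𝐂` of a path `x ∈ C([-τ,T],ℝ^d)`, for `t ∈ [0,T]`. -/
def seg {d : ℕ} {τ T : ℝ} (h : -τ ≤ T) (x : Traj τ T d) (t : ℝ) : Hist τ d :=
  ⟨fun s => x (projIcc (-τ) T h (t + s.1)),
    x.continuous.comp <| continuous_projIcc.comp <| continuous_const.add continuous_subtype_val⟩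

/-- The uniform Lipschitz assumption on the coefficients:
`|b(φ)−b(ψ)|² + |σ(φ)−σ(ψ)|² ≤ κ₁ ‖φ−ψ‖²`. -/
def LipCoeff {d m : ℕ} {τ : ℝ} (b : Hist τ d → Vec d)
    (σ' : Hist τ d → Matrix (Fin d) (Fin m) ℝ) (κ₁ : ℝ) : Prop :=
  ∀ φ ψ : Hist τ d, ‖b φ - b ψ‖ ^ 2 + frobSq (σ' φ - σ' ψ) ≤ κ₁ * ‖φ - ψ‖ ^ 2

/-- The linear growth bound `|b(φ)|² + |σ(φ)|² ≤ κ₂ (1 + ‖φ‖²)`. -/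
def GrowthCoeff {d m : ℕ} {τ : ℝ} (b : Hist τ d → Vec d)
    (σ' : Hist τ d → Matrix (Fin d) (Fin m) ℝ) (κ₂ : ℝ) : Prop :=
  ∀ φ : Hist τ d, ‖b φ‖ ^ 2 + frobSq (σ' φ) ≤ κ₂ * (1 + ‖φ‖ ^ 2)

/-- The set `U_T(x)` of controls `u ∈ L²([0,T],ℝ^m)` satisfying
`x(t) = x(0) + ∫₀ᵗ b(x_s) ds + ∫₀ᵗ σ(x_s) u(s) ds` for `t ∈ [0,T]`. -/
def controls {d m : ℕ} {τ T : ℝ} (h : -τ ≤ T) (b : Hist τ d → Vec d)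
    (σ' : Hist τ d → Matrix (Fin d) (Fin m) ℝ) (x : Traj τ T d) : Set (ℝ → Vec m) :=
  {u | MemLp u 2 (volume.restrict (Icc 0 T)) ∧
    ∀ t ∈ Icc (0:ℝ) T,
      ev h x t = ev h x 0 + (∫ s in (0:ℝ)..t, b (seg h x s)) +
        ∫ s in (0:ℝ)..t, matVec (σ' (seg h x s)) (u s)}

/-- The rate function `I_T(x) = inf_{u ∈ U_T(x)} ½∫₀ᵀ |u(s)|² ds` (with value `∞` if
`U_T(x) = ∅`). -/
def rate {d m : ℕ} {τ T : ℝ} (h : -τ ≤ T) (b : Hist τ d → Vec d)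
    (σ' : Hist τ d → Matrix (Fin d) (Fin m) ℝ) (x : Traj τ T d) : ℝ≥0∞ :=
  ⨅ (u : ℝ → Vec m) (_ : u ∈ controls h b σ' x),
    ENNReal.ofReal ((1/2) * ∫ s in (0:ℝ)..T, ‖u s‖ ^ 2)

open Classical in
/-- The rate function `I_T^φ(x)`, which is `I_T(x)` if `x₀ = φ` and `∞` otherwise. -/
def rateAt {d m : ℕ} {τ T : ℝ} (h : -τ ≤ T) (b : Hist τ d → Vec d)
    (σ' : Hist τ d → Matrix (Fin d) (Fin m) ℝ) (φ : Hist τ d) (x : Traj τ T d) : ℝ≥0∞ :=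
  if seg h x 0 = φ then rate h b σ' x else ⊤

/-- Restriction of `x ∈ C([-τ,T],ℝ^d)` to `[-τ,S]`. -/
def restrictTraj {d : ℕ} {τ T : ℝ} (S : ℝ) (hST : S ≤ T) (x : Traj τ T d) :
    Traj τ S d :=
  ⟨fun t => x ⟨t.1, t.2.1, t.2.2.trans hST⟩,
    x.continuous.comp <| Continuous.subtype_mk continuous_subtype_val _⟩

/-- The shifted path `x^S ∈ C([-τ,T-S],ℝ^d)`, `x^S(t) = x(S+t)`. -/
def shiftTraj {d : ℕ} {τ T : ℝ} (h : -τ ≤ T) (S : ℝ) (x : Traj τ T d) : Traj τ (T - S) d :=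
  ⟨fun t => x (projIcc (-τ) T h (S + t.1)),
    x.continuous.comp <| continuous_projIcc.comp <| continuous_const.add continuous_subtype_val⟩

section MemLp

variable {E : Type*} [NormedAddCommGroup E] {α : Type*} [MeasurableSpace α] {μ : Measure α}

lemma memLp_two_restrict_union_iff {u : α → E} {s t : Set α} :
    MemLp u 2 (μ.restrict (s ∪ t)) ↔ MemLp u 2 (μ.restrict s) ∧ MemLp u 2 (μ.restrict t) := by
  refine ⟨fun h => ⟨h.mono_measure (Measure.restrict_mono subset_union_left le_rfl),
    h.mono_measure (Measure.restrict_mono subset_union_right le_rfl)⟩, fun ⟨hs, ht⟩ => ?_⟩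
  rw [memLp_two_iff_integrable_sq_norm (aestronglyMeasurable_union_iff.2 ⟨hs.1, ht.1⟩)]
  exact IntegrableOn.union ((memLp_two_iff_integrable_sq_norm hs.1).1 hs)
    ((memLp_two_iff_integrable_sq_norm ht.1).1 ht)

end MemLp

section RealLine

variable {E : Type*} [NormedAddCommGroup E] {S T : ℝ}

lemma memLp_comp_const_add_iff {p : ℝ≥0∞} {u : ℝ → E} (S : ℝ) (s : Set ℝ) :
    MemLp (fun r => u (S + r)) p (volume.restrict ((S + ·) ⁻¹' s)) ↔
      MemLp u p (volume.restrict s) := by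
  let e := MeasurableEquiv.addLeft S
  have he : MeasurePreserving e (volume.restrict (e ⁻¹' s)) (volume.restrict s) :=
    (measurePreserving_add_left volume S).restrict_preimage_emb e.measurableEmbedding s
  rw [← he.map_eq]
  exact e.memLp_map_measure_iff.symm

lemma memLp_two_Icc_iff {u : ℝ → E} (hS : 0 ≤ S) (hST : S ≤ T) :
    MemLp u 2 (volume.restrict (Icc 0 T)) ↔
      MemLp u 2 (volume.restrict (Icc 0 S)) ∧
        MemLp (fun r => u (S + r)) 2 (volume.restrict (Icc 0 (T - S))) := by
  rw [← Icc_union_Icc_eq_Icc hS hST, memLp_two_restrict_union_iff,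
    ← memLp_comp_const_add_iff S (Icc S T), preimage_const_add_Icc, sub_self]

lemma MeasureTheory.IntegrableOn.intervalIntegrable_of_mem_Icc {F : ℝ → E} {a b s t : ℝ}
    (hF : IntegrableOn F (Icc a b)) (hs : s ∈ Icc a b) (ht : t ∈ Icc a b) :
    IntervalIntegrable F volume s t :=
  (hF.mono_set (uIcc_subset_Icc hs ht)).intervalIntegrable

lemma intervalIntegral_eq_add_comp_const_add [NormedSpace ℝ E] {F : ℝ → E}
    (h₁ : IntervalIntegrable F volume 0 S) (h₂ : IntervalIntegrable F volume S T) :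
    ∫ s in (0:ℝ)..T, F s = (∫ s in (0:ℝ)..S, F s) + ∫ s in (0:ℝ)..(T - S), F (S + s) := by
  rw [intervalIntegral.integral_comp_add_left, add_zero, add_sub_cancel,
    intervalIntegral.integral_add_adjacent_intervals h₁ h₂]

def IsPrimitiveOn [NormedSpace ℝ E] (X F : ℝ → E) (T : ℝ) : Prop :=
  ∀ t ∈ Icc 0 T, X t = X 0 + ∫ s in (0:ℝ)..t, F s

section IsPrimitiveOn

variable [NormedSpace ℝ E] {X Y F G : ℝ → E}

lemma isPrimitiveOn_congr (hX : EqOn X Y (Icc 0 T)) (hF : EqOn F G (Icc 0 T)) :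
    IsPrimitiveOn X F T ↔ IsPrimitiveOn Y G T := by
  refine forall₂_congr fun t ht => ?_
  have h0 : (0:ℝ) ∈ Icc 0 T := ⟨le_rfl, ht.1.trans ht.2⟩
  rw [hX ht, hX h0, intervalIntegral.integral_congr fun s hs => hF (uIcc_subset_Icc h0 ht hs)]

lemma IsPrimitiveOn.mono (h : IsPrimitiveOn X F T) (hST : S ≤ T) : IsPrimitiveOn X F S :=
  fun t ht => h t ⟨ht.1, ht.2.trans hST⟩

lemma isPrimitiveOn_iff_of_le (hS : 0 ≤ S) (hST : S ≤ T) (hF : IntegrableOn F (Icc 0 T)) :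
    IsPrimitiveOn X F T ↔
      IsPrimitiveOn X F S ∧ IsPrimitiveOn (fun t => X (S + t)) (fun s => F (S + s)) (T - S) := by
  have hS' : S ∈ Icc 0 T := ⟨hS, hST⟩
  have h0 : (0:ℝ) ∈ Icc 0 T := ⟨le_rfl, hS.trans hST⟩
  have split : ∀ t ∈ Icc S T, ∫ s in (0:ℝ)..t, F s =
      (∫ s in (0:ℝ)..S, F s) + ∫ s in (0:ℝ)..(t - S), F (S + s) := fun t ht =>
    intervalIntegral_eq_add_comp_const_add (hF.intervalIntegrable_of_mem_Icc h0 hS')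
      (hF.intervalIntegrable_of_mem_Icc hS' ⟨hS.trans ht.1, ht.2⟩)
  refine ⟨fun h => ⟨h.mono hST, fun t ht => ?_⟩, fun ⟨h₁, h₂⟩ t ht => ?_⟩
  · have hSt : S + t ∈ Icc S T := ⟨by linarith [ht.1], by linarith [ht.2]⟩
    dsimp only
    rw [h (S + t) ⟨hS.trans hSt.1, hSt.2⟩, split _ hSt, add_sub_cancel_left, add_zero, h S hS',
      add_assoc]
  · rcases le_total t S with htS | hSt
    · exact h₁ t ⟨ht.1, htS⟩
    · have hshift := h₂ (t - S) ⟨sub_nonneg.2 hSt, by linarith [ht.2]⟩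
      dsimp only at hshift
      rw [add_sub_cancel, add_zero, h₁ S ⟨hS, le_rfl⟩] at hshift
      rw [hshift, split t ⟨hSt, ht.2⟩, add_assoc]

end IsPrimitiveOn

def concatAt {α : Type*} (S : ℝ) (u₁ u₂ : ℝ → α) : ℝ → α :=
  fun s => if s < S then u₁ s else u₂ (s - S)

lemma concatAt_ae_eq_left {α : Type*} (S : ℝ) (u₁ u₂ : ℝ → α) :
    concatAt S u₁ u₂ =ᵐ[volume.restrict (Iic S)] u₁ := by
  rw [← Measure.restrict_congr_set Iio_ae_eq_Iic]
  exact ae_restrict_of_forall_mem measurableSet_Iio fun s hs => if_pos hs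

lemma concatAt_const_add {α : Type*} {r : ℝ} (u₁ u₂ : ℝ → α) (hr : 0 ≤ r) :
    concatAt S u₁ u₂ (S + r) = u₂ r := by
  simp [concatAt, hr.not_gt]

def controlCost (T : ℝ) (u : ℝ → E) : ℝ≥0∞ :=
  ENNReal.ofReal ((1/2) * ∫ s in (0:ℝ)..T, ‖u s‖ ^ 2)

section ControlCost

variable {u v : ℝ → E}

lemma controlCost_congr_ae (hT : 0 ≤ T) (huv : u =ᵐ[volume.restrict (Icc 0 T)] v) :
    controlCost T u = controlCost T v := by
  rw [controlCost, controlCost, intervalIntegral.integral_congr_ae_restrict]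
  filter_upwards [ae_restrict_of_ae_restrict_of_subset
    (uIoc_subset_uIcc.trans (uIcc_subset_Icc ⟨le_rfl, hT⟩ ⟨hT, le_rfl⟩)) huv] with s hs
  rw [hs]

lemma controlCost_eq_add (hS : 0 ≤ S) (hST : S ≤ T)
    (hu : MemLp u 2 (volume.restrict (Icc 0 T))) :
    controlCost T u = controlCost S u + controlCost (T - S) (fun r => u (S + r)) := by
  have hsq : IntegrableOn (fun s => ‖u s‖ ^ 2) (Icc 0 T) :=
    (memLp_two_iff_integrable_sq_norm hu.1).1 hu
  have h0 : (0:ℝ) ∈ Icc 0 T := ⟨le_rfl, hS.trans hST⟩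
  rw [controlCost, intervalIntegral_eq_add_comp_const_add
    (hsq.intervalIntegrable_of_mem_Icc h0 ⟨hS, hST⟩)
    (hsq.intervalIntegrable_of_mem_Icc ⟨hS, hST⟩ ⟨hS.trans hST, le_rfl⟩), mul_add,
    ENNReal.ofReal_add, controlCost, controlCost]
  all_goals
    refine mul_nonneg (by norm_num) (intervalIntegral.integral_nonneg (by linarith) fun s _ => ?_)
    positivity

end ControlCost

end RealLine

lemma matVec_eq_sum {d m : ℕ} (M : Matrix (Fin d) (Fin m) ℝ) (v : Vec m) :
    matVec M v = ∑ j, v j • WithLp.toLp 2 (fun i => M i j) := by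
  ext i
  simp [matVec, mul_comm]

lemma integrableOn_matVec {d m : ℕ} {a c : ℝ} {A : ℝ → Matrix (Fin d) (Fin m) ℝ}
    (hA : ContinuousOn A (Icc a c)) {u : ℝ → Vec m}
    (hu : MemLp u 2 (volume.restrict (Icc a c))) :
    IntegrableOn (fun s => matVec (A s) (u s)) (Icc a c) := by
  have hu₁ : IntegrableOn u (Icc a c) := hu.integrable one_le_two
  simp_rw [matVec_eq_sum]
  refine integrable_finsetSum _ fun j _ => ?_
  refine IntegrableOn.smul_continuousOn ?_ ?_ isCompact_Icc
  · exact (EuclideanSpace.proj j : Vec m →L[ℝ] ℝ).integrable_comp hu₁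
  · fun_prop

section Trajectories

variable {d m : ℕ} {τ S T : ℝ}

lemma continuous_seg (h : -τ ≤ T) (x : Traj τ T d) : Continuous (seg h x) :=
  ContinuousMap.continuous_of_continuous_uncurry _ <|
    x.continuous.comp <| continuous_projIcc.comp <|
      continuous_fst.add (continuous_subtype_val.comp continuous_snd)

lemma seg_apply (h : -τ ≤ T) (x : Traj τ T d) (t : ℝ) (s : Icc (-τ) (0:ℝ)) :
    seg h x t s = ev h x (t + s) := rfl

lemma ev_restrictTraj (h : -τ ≤ T) (h₁ : -τ ≤ S) (hST : S ≤ T) (x : Traj τ T d) {t : ℝ}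
    (ht : t ≤ S) : ev h₁ (restrictTraj S hST x) t = ev h x t := by
  show x _ = x _
  congr 1
  ext
  simp [coe_projIcc, min_eq_right ht, min_eq_right (ht.trans hST)]

lemma seg_restrictTraj (h : -τ ≤ T) (h₁ : -τ ≤ S) (hST : S ≤ T) (x : Traj τ T d) {t : ℝ}
    (ht : t ≤ S) : seg h₁ (restrictTraj S hST x) t = seg h x t :=
  ContinuousMap.ext fun s => ev_restrictTraj h h₁ hST x (by linarith [s.2.2])

lemma ev_shiftTraj (h : -τ ≤ T) (h₂ : -τ ≤ T - S) (x : Traj τ T d) {t : ℝ}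
    (ht : t ∈ Icc (-τ) (T - S)) : ev h₂ (shiftTraj h S x) t = ev h x (S + t) := by
  show x _ = x _
  rw [projIcc_of_mem h₂ ht]

lemma seg_shiftTraj (h : -τ ≤ T) (h₂ : -τ ≤ T - S) (x : Traj τ T d) {t : ℝ}
    (ht : t ∈ Icc 0 (T - S)) : seg h₂ (shiftTraj h S x) t = seg h x (S + t) :=
  ContinuousMap.ext fun s => by
    rw [seg_apply, seg_apply, ev_shiftTraj h h₂ x ⟨by linarith [s.2.1, ht.1], by
      linarith [s.2.2, ht.2]⟩, add_assoc]

end Trajectories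

def controlledDrift {d m : ℕ} {τ T : ℝ} (h : -τ ≤ T) (b : Hist τ d → Vec d)
    (σ' : Hist τ d → Matrix (Fin d) (Fin m) ℝ) (x : Traj τ T d) (u : ℝ → Vec m) : ℝ → Vec d :=
  fun s => b (seg h x s) + matVec (σ' (seg h x s)) (u s)

section Controls

variable {d m : ℕ} {τ S T : ℝ} {b : Hist τ d → Vec d}
  {σ' : Hist τ d → Matrix (Fin d) (Fin m) ℝ} {u v : ℝ → Vec m}

lemma controls_congr_ae (h : -τ ≤ T) (x : Traj τ T d)
    (huv : u =ᵐ[volume.restrict (Icc 0 T)] v) (hu : u ∈ controls h b σ' x) :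
    v ∈ controls h b σ' x := by
  refine ⟨hu.1.ae_eq huv, fun t ht => (hu.2 t ht).trans ?_⟩
  have h0 : (0:ℝ) ∈ Icc 0 T := ⟨le_rfl, ht.1.trans ht.2⟩
  congr 1
  refine intervalIntegral.integral_congr_ae_restrict ?_
  filter_upwards [ae_restrict_of_ae_restrict_of_subset
    (uIoc_subset_uIcc.trans (uIcc_subset_Icc h0 ht)) huv] with s hs
  rw [hs]

variable (hb : Continuous b) (hσ : Continuous σ')
include hb hσ

lemma integrableOn_controlledDrift (h : -τ ≤ T) (x : Traj τ T d)
    (hu : MemLp u 2 (volume.restrict (Icc 0 T))) :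
    IntegrableOn (controlledDrift h b σ' x u) (Icc 0 T) :=
  ((hb.comp (continuous_seg h x)).continuousOn.integrableOn_Icc).add
    (integrableOn_matVec (hσ.comp (continuous_seg h x)).continuousOn hu)

lemma mem_controls_iff (h : -τ ≤ T) (x : Traj τ T d) :
    u ∈ controls h b σ' x ↔
      MemLp u 2 (volume.restrict (Icc 0 T)) ∧
        IsPrimitiveOn (ev h x) (controlledDrift h b σ' x u) T := by
  refine and_congr_right fun hu => forall₂_congr fun t ht => ?_
  have h0 : (0:ℝ) ∈ Icc 0 T := ⟨le_rfl, ht.1.trans ht.2⟩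
  rw [add_assoc, ← intervalIntegral.integral_add]
  · rfl
  · exact (hb.comp (continuous_seg h x)).intervalIntegrable _ _
  · exact IntegrableOn.intervalIntegrable_of_mem_Icc
      (integrableOn_matVec (hσ.comp (continuous_seg h x)).continuousOn hu) h0 ht

theorem mem_controls_iff_restrictTraj_shiftTraj (hτ : 0 ≤ τ) (hS : 0 ≤ S) (hST : S ≤ T)
    (h : -τ ≤ T) (h₁ : -τ ≤ S) (h₂ : -τ ≤ T - S) (x : Traj τ T d) :
    u ∈ controls h b σ' x ↔
      u ∈ controls h₁ b σ' (restrictTraj S hST x) ∧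
        (fun r => u (S + r)) ∈ controls h₂ b σ' (shiftTraj h S x) := by
  have hev₁ : EqOn (ev h₁ (restrictTraj S hST x)) (ev h x) (Icc 0 S) := fun t ht =>
    ev_restrictTraj h h₁ hST x ht.2
  have hdrift₁ : EqOn (controlledDrift h₁ b σ' (restrictTraj S hST x) u)
      (controlledDrift h b σ' x u) (Icc 0 S) := fun t ht => by
    simp only [controlledDrift, seg_restrictTraj h h₁ hST x ht.2]
  have hev₂ : EqOn (ev h₂ (shiftTraj h S x)) (fun t => ev h x (S + t)) (Icc 0 (T - S)) :=
    fun t ht => ev_shiftTraj h h₂ x ⟨by linarith [ht.1], ht.2⟩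
  have hdrift₂ : EqOn (controlledDrift h₂ b σ' (shiftTraj h S x) fun r => u (S + r))
      (fun t => controlledDrift h b σ' x u (S + t)) (Icc 0 (T - S)) := fun t ht => by
    simp only [controlledDrift, seg_shiftTraj h h₂ x ht]
  rw [mem_controls_iff hb hσ, mem_controls_iff hb hσ, mem_controls_iff hb hσ,
    isPrimitiveOn_congr hev₁ hdrift₁, isPrimitiveOn_congr hev₂ hdrift₂]
  constructor
  · rintro ⟨hu, hprim⟩
    obtain ⟨hprim₁, hprim₂⟩ :=
      (isPrimitiveOn_iff_of_le hS hST (integrableOn_controlledDrift hb hσ h x hu)).1 hprim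
    obtain ⟨hu₁, hu₂⟩ := (memLp_two_Icc_iff hS hST).1 hu
    exact ⟨⟨hu₁, hprim₁⟩, hu₂, hprim₂⟩
  · rintro ⟨⟨hu₁, hprim₁⟩, hu₂, hprim₂⟩
    have hu := (memLp_two_Icc_iff hS hST).2 ⟨hu₁, hu₂⟩
    exact ⟨hu, (isPrimitiveOn_iff_of_le hS hST
      (integrableOn_controlledDrift hb hσ h x hu)).2 ⟨hprim₁, hprim₂⟩⟩

end Controls

lemma controlCost_concatAt {m : ℕ} {S T : ℝ} (hS : 0 ≤ S) (hST : S ≤ T) {u₁ u₂ : ℝ → Vec m}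
    (hu : MemLp (concatAt S u₁ u₂) 2 (volume.restrict (Icc 0 T))) :
    controlCost T (concatAt S u₁ u₂) = controlCost S u₁ + controlCost (T - S) u₂ := by
  rw [controlCost_eq_add hS hST hu,
    controlCost_congr_ae hS (ae_restrict_of_ae_restrict_of_subset Icc_subset_Iic_self
      (concatAt_ae_eq_left S u₁ u₂)),
    controlCost_congr_ae (sub_nonneg.2 hST) (ae_restrict_of_forall_mem measurableSet_Icc
      fun r hr => concatAt_const_add u₁ u₂ hr.1)]

theorem concatAt_mem_controls {d m : ℕ} {τ S T : ℝ} {b : Hist τ d → Vec d}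
    {σ' : Hist τ d → Matrix (Fin d) (Fin m) ℝ} (hb : Continuous b) (hσ : Continuous σ')
    (hτ : 0 ≤ τ) (hS : 0 ≤ S) (hST : S ≤ T) (h : -τ ≤ T) (h₁ : -τ ≤ S) (h₂ : -τ ≤ T - S)
    (x : Traj τ T d) {u₁ u₂ : ℝ → Vec m} (hu₁ : u₁ ∈ controls h₁ b σ' (restrictTraj S hST x))
    (hu₂ : u₂ ∈ controls h₂ b σ' (shiftTraj h S x)) :
    concatAt S u₁ u₂ ∈ controls h b σ' x := by
  refine (mem_controls_iff_restrictTraj_shiftTraj hb hσ hτ hS hST h h₁ h₂ x).2 ⟨?_, ?_⟩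
  · refine controls_congr_ae h₁ _ ?_ hu₁
    filter_upwards [ae_restrict_of_ae_restrict_of_subset Icc_subset_Iic_self
      (concatAt_ae_eq_left S u₁ u₂)] with s hs
    exact hs.symm
  · refine controls_congr_ae h₂ _ (ae_restrict_of_forall_mem measurableSet_Icc fun r hr => ?_) hu₂
    exact (concatAt_const_add u₁ u₂ hr.1).symm

/-- Lemma 4.1: `I_T(x) = I_S(x|_{[-τ,S]}) + I_{T-S}(x^S)`. -/
theorem stmt_0 {d m : ℕ} {τ S T : ℝ} (hτ : 0 < τ)
    (hS : 0 ≤ S) (hST : S < T)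
    (b : Hist τ d → Vec d) (σ' : Hist τ d → Matrix (Fin d) (Fin m) ℝ)
    (hb : Continuous b) (hσ : Continuous σ')
    (x : Traj τ T d) :
    rate (by linarith) b σ' x
      = rate (by linarith) b σ' (restrictTraj S hST.le x)
        + rate (by linarith) b σ' (shiftTraj (by linarith) S x) := by
  have h : -τ ≤ T := by linarith
  have h₁ : -τ ≤ S := by linarith
  have h₂ : -τ ≤ T - S := by linarith
  apply le_antisymm
  · simp only [rate, ENNReal.iInf_add, ENNReal.add_iInf]
    refine le_iInf₂ fun u₂ hu₂ => le_iInf₂ fun u₁ hu₁ => ?_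
    have hu := concatAt_mem_controls hb hσ hτ.le hS hST.le h h₁ h₂ x hu₁ hu₂
    calc _ ≤ controlCost T (concatAt S u₁ u₂) := iInf₂_le _ hu
      _ = _ := controlCost_concatAt hS hST.le hu.1
  · refine le_iInf₂ fun u hu => ?_
    obtain ⟨hu₁, hu₂⟩ :=
      (mem_controls_iff_restrictTraj_shiftTraj hb hσ hτ.le hS hST.le h h₁ h₂ x).1 hu
    calc _ ≤ controlCost S u + controlCost (T - S) (fun r => u (S + r)) :=
          add_le_add (iInf₂_le u hu₁) (iInf₂_le _ hu₂)
      _ = controlCost T u := (controlCost_eq_add hS hST.le hu.1).symm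
end
end

section
/- Suppose m = d, b and σ satisfy the Lipschitz assumption, and a = σσ' is uniformly elliptic. Let x* be a periodic solution of the DDE with period p > 0 and orbit 𝐎 = {x*_t : t ∈ [0,p)} ⊂ 𝐂. Then for every α > 0 there exist constants μ, T₁ > 0 such that for every φ in the closure of 𝐁(𝐎,μ) and every ψ ∈ 𝐎, there exist T ≤ T₁ and x ∈ C([-τ,T],ℝ^d) with x₀ = φ, x_T = ψ and I_T(x) ≤ α. -/
open MeasureTheory Set Metric
open scoped ENNReal

noncomputable section

/-- The history segment `x_t ∈ 𝐂` of a function `x ∈ C(ℝ,ℝ^d)` (used for functions on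
`[-τ,∞)`, extended continuously to `ℝ`). -/
def segF {d : ℕ} (τ : ℝ) (x : C(ℝ, Vec d)) (t : ℝ) : Hist τ d :=
  ⟨fun s => x (t + s.1), x.continuous.comp <| continuous_const.add continuous_subtype_val⟩

/-- `x` is a solution of the DDE `x(t) = x(0) + ∫₀ᵗ b(x_s) ds`, `t ≥ 0`. -/
def IsDDESol {d : ℕ} (τ : ℝ) (b : Hist τ d → Vec d) (x : C(ℝ, Vec d)) : Prop :=
  ∀ t : ℝ, 0 ≤ t → x t = x 0 + ∫ s in (0:ℝ)..t, b (segF τ x s)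

/-- `x` is a periodic solution of the DDE with period `p`. -/
def IsPeriodicSol {d : ℕ} (τ : ℝ) (b : Hist τ d → Vec d) (x : C(ℝ, Vec d)) (p : ℝ) : Prop :=
  IsDDESol τ b x ∧ 0 < p ∧ ∀ t : ℝ, -τ ≤ t → x (t + p) = x t

/-- The orbit `𝐎 = {x*_t : t ∈ [0,p)} ⊂ 𝐂` of a periodic solution. -/
def orbit {d : ℕ} (τ : ℝ) (x : C(ℝ, Vec d)) (p : ℝ) : Set (Hist τ d) :=
  (segF τ x) '' Ico 0 p

/-- Uniform ellipticity of `a = σσ'`: `ν' a(φ) ν ≥ c |ν|²`. -/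
def UnifElliptic {d : ℕ} {τ : ℝ} (σ' : Hist τ d → Matrix (Fin d) (Fin d) ℝ) (c : ℝ) : Prop :=
  ∀ (φ : Hist τ d) (ν : Fin d → ℝ),
    c * (∑ i, ν i ^ 2) ≤ dotProduct ν ((σ' φ * Matrix.transpose (σ' φ)).mulVec ν)

/-!
Choose `r` with `x*_r` within `μ` of `φ`. The path starts with the history `φ`, then follows
`x*(· + r)` plus the offset `φ(0) - x*(r)`, which a smooth cutoff fades out in unit time; after
waiting a whole number of periods it ends on any prescribed point `x*_{t₀}` of the orbit. Along the
path the forcing differs from the drift by `O(μ)` (Lipschitz bound on `b`), and uniform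
ellipticity solves `σ u = g` with `c |u|² ≤ |g|²`. The energy is therefore `O(T₁ μ²)`, which is
below `α` once `μ` is small.
-/

open Matrix

section Ellipticity

variable {n k : Type*} [Fintype n] [Fintype k] {c : ℝ} {M : Matrix n k ℝ}

theorem posDef_mul_transpose_of_elliptic (hc : 0 < c)
    (hM : ∀ ν : n → ℝ, c * ∑ i, ν i ^ 2 ≤ ν ⬝ᵥ (M * Mᵀ) *ᵥ ν) : (M * Mᵀ).PosDef := by
  refine .of_dotProduct_mulVec_pos (by simpa using isHermitian_mul_conjTranspose_self M)
    fun ν hν => ?_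
  obtain ⟨i, hi⟩ := Function.ne_iff.mp hν
  have hpos : 0 < ∑ i, ν i ^ 2 :=
    Finset.sum_pos' (fun _ _ => sq_nonneg _) ⟨i, Finset.mem_univ i, sq_pos_of_ne_zero hi⟩
  simpa using (mul_pos hc hpos).trans_le (hM ν)

theorem mul_transpose_mul_inv_of_elliptic [DecidableEq n] (hc : 0 < c)
    (hM : ∀ ν : n → ℝ, c * ∑ i, ν i ^ 2 ≤ ν ⬝ᵥ (M * Mᵀ) *ᵥ ν) : M * (Mᵀ * (M * Mᵀ)⁻¹) = 1 := by
  rw [← Matrix.mul_assoc,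
    mul_nonsing_inv _ (posDef_mul_transpose_of_elliptic hc hM).det_pos.ne'.isUnit]

theorem sum_sq_transpose_mul_inv_mulVec_le [DecidableEq n] (hc : 0 < c)
    (hM : ∀ ν : n → ℝ, c * ∑ i, ν i ^ 2 ≤ ν ⬝ᵥ (M * Mᵀ) *ᵥ ν) (g : n → ℝ) :
    ∑ i, ((Mᵀ * (M * Mᵀ)⁻¹) *ᵥ g) i ^ 2 ≤ (∑ i, g i ^ 2) / c := by
  set ν := (M * Mᵀ)⁻¹ *ᵥ g
  have hν : (M * Mᵀ) *ᵥ ν = g := by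
    rw [mulVec_mulVec,
      mul_nonsing_inv _ (posDef_mul_transpose_of_elliptic hc hM).det_pos.ne'.isUnit, one_mulVec]
  have henergy : ∑ i, ((Mᵀ * (M * Mᵀ)⁻¹) *ᵥ g) i ^ 2 = ν ⬝ᵥ g := by
    rw [← mulVec_mulVec]
    calc ∑ i, (Mᵀ *ᵥ ν) i ^ 2 = (Mᵀ *ᵥ ν) ⬝ᵥ (Mᵀ *ᵥ ν) := by simp only [dotProduct, sq]
      _ = ν ⬝ᵥ g := by
        rw [dotProduct_mulVec, vecMul_transpose, mulVec_mulVec, hν, dotProduct_comm]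
  have hcoercive : c * ∑ i, ν i ^ 2 ≤ ν ⬝ᵥ g := hν ▸ hM ν
  have hcauchy : (ν ⬝ᵥ g) ^ 2 ≤ (∑ i, ν i ^ 2) * ∑ i, g i ^ 2 :=
    Finset.sum_mul_sq_le_sq_mul_sq _ _ _
  rw [henergy, le_div_iff₀ hc]
  have hν₀ : 0 ≤ ∑ i, ν i ^ 2 := Finset.sum_nonneg fun i _ => sq_nonneg (ν i)
  have hg₀ : 0 ≤ ∑ i, g i ^ 2 := Finset.sum_nonneg fun i _ => sq_nonneg (g i)
  nlinarith [mul_le_mul_of_nonneg_left hcauchy hc.le, mul_le_mul_of_nonneg_right hcoercive hg₀]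

end Ellipticity

theorem Continuous.matrix_inv {X 𝕜 : Type*} [TopologicalSpace X] [NormedField 𝕜]
    {n : Type*} [Fintype n] [DecidableEq n] {A : X → Matrix n n 𝕜} (hA : Continuous A)
    (hdet : ∀ x, (A x).det ≠ 0) : Continuous fun x => (A x)⁻¹ :=
  continuous_iff_continuousAt.2 fun x =>
    (continuousAt_matrix_inv _ (by
      rw [Ring.inverse_eq_inv']; exact continuousAt_inv₀ (hdet x))).comp hA.continuousAt

section MatVec

variable {d m k : ℕ}

theorem matVec_eq_toLp_mulVec (M : Matrix (Fin d) (Fin m) ℝ) (v : Vec m) :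
    matVec M v = WithLp.toLp 2 (M *ᵥ WithLp.ofLp v) := rfl

theorem matVec_matVec (M : Matrix (Fin d) (Fin m) ℝ) (P : Matrix (Fin m) (Fin k) ℝ) (v : Vec k) :
    matVec M (matVec P v) = matVec (M * P) v := by
  simp only [matVec_eq_toLp_mulVec, mulVec_mulVec]

theorem matVec_one (v : Vec d) : matVec 1 v = v := by
  simp only [matVec_eq_toLp_mulVec, one_mulVec]

theorem Continuous.matVec {X : Type*} [TopologicalSpace X] {P : X → Matrix (Fin d) (Fin m) ℝ}
    {v : X → Vec m} (hP : Continuous P) (hv : Continuous v) :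
    Continuous fun x => _root_.matVec (P x) (v x) :=
  (PiLp.continuous_toLp 2 _).comp (hP.matrix_mulVec ((PiLp.continuous_ofLp 2 _).comp hv))

end MatVec

theorem sq_le_frobSq {d m : ℕ} (M : Matrix (Fin d) (Fin m) ℝ) (i : Fin d) (j : Fin m) :
    M i j ^ 2 ≤ frobSq M :=
  (Finset.single_le_sum (fun j _ => sq_nonneg (M i j)) (Finset.mem_univ j)).trans
    (Finset.single_le_sum (f := fun i => ∑ j, M i j ^ 2)
      (fun _ _ => Finset.sum_nonneg fun _ _ => sq_nonneg _) (Finset.mem_univ i))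

theorem frobSq_nonneg {d m : ℕ} (M : Matrix (Fin d) (Fin m) ℝ) : 0 ≤ frobSq M :=
  Finset.sum_nonneg fun _ _ => Finset.sum_nonneg fun _ _ => sq_nonneg _

namespace LipCoeff

variable {d m : ℕ} {τ κ₁ : ℝ} {b : Hist τ d → Vec d} {σ' : Hist τ d → Matrix (Fin d) (Fin m) ℝ}

theorem norm_drift_sub_le (hl : LipCoeff b σ' κ₁) (φ ψ : Hist τ d) :
    ‖b φ - b ψ‖ ≤ √κ₁ * ‖φ - ψ‖ := by
  have h := Real.abs_le_sqrt ((le_add_of_nonneg_right (frobSq_nonneg _)).trans (hl φ ψ))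
  rwa [abs_norm, Real.sqrt_mul' _ (sq_nonneg _), Real.sqrt_sq (norm_nonneg _)] at h

theorem abs_diffusion_sub_le (hl : LipCoeff b σ' κ₁) (φ ψ : Hist τ d) (i : Fin d) (j : Fin m) :
    |σ' φ i j - σ' ψ i j| ≤ √κ₁ * ‖φ - ψ‖ := by
  have h := Real.abs_le_sqrt ((sq_le_frobSq (σ' φ - σ' ψ) i j).trans
    ((le_add_of_nonneg_left (sq_nonneg _)).trans (hl φ ψ)))
  rwa [Matrix.sub_apply, Real.sqrt_mul' _ (sq_nonneg _), Real.sqrt_sq (norm_nonneg _)] at h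

theorem continuous_drift (hl : LipCoeff b σ' κ₁) : Continuous b :=
  (LipschitzWith.of_dist_le_mul (K := ⟨√κ₁, Real.sqrt_nonneg _⟩) fun φ ψ => by
    rw [dist_eq_norm, dist_eq_norm]; exact hl.norm_drift_sub_le φ ψ).continuous

theorem continuous_diffusion (hl : LipCoeff b σ' κ₁) : Continuous σ' :=
  continuous_matrix fun i j =>
    (LipschitzWith.of_dist_le_mul (K := ⟨√κ₁, Real.sqrt_nonneg _⟩) fun φ ψ => by
      rw [Real.dist_eq, dist_eq_norm]; exact hl.abs_diffusion_sub_le φ ψ i j).continuous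

end LipCoeff

section Segments

variable {d : ℕ} {τ : ℝ}

@[fun_prop]
theorem continuous_segF (τ : ℝ) (x : C(ℝ, Vec d)) : Continuous (segF τ x) :=
  ContinuousMap.continuous_of_continuous_uncurry _
    (show Continuous fun q : ℝ × Icc (-τ) (0 : ℝ) => x (q.1 + q.2.1) by fun_prop)

theorem seg_restrict {T : ℝ} (h : -τ ≤ T) (X : C(ℝ, Vec d)) {t : ℝ} (ht : t ∈ Icc 0 T) :
    seg h (X.restrict (Icc (-τ) T)) t = segF τ X t := by
  ext q : 1
  have hq : t + q.1 ∈ Icc (-τ) T := ⟨by linarith [q.2.1, ht.1], by linarith [q.2.2, ht.2]⟩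
  simp [seg, segF, projIcc_of_mem h hq]

theorem ev_restrict {T : ℝ} (h : -τ ≤ T) (X : C(ℝ, Vec d)) {t : ℝ} (ht : t ∈ Icc (-τ) T) :
    ev h (X.restrict (Icc (-τ) T)) t = X t := by
  simp [ev, projIcc_of_mem h ht]

end Segments


theorem mem_controls_restrict {d m : ℕ} {τ T : ℝ} (hτ : 0 ≤ τ) (h : -τ ≤ T)
    {b : Hist τ d → Vec d} {σ' : Hist τ d → Matrix (Fin d) (Fin m) ℝ} (hb : Continuous b)
    {X : C(ℝ, Vec d)} {f : ℝ → Vec d} (hf : Continuous f)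
    (hX : ∀ t ∈ Icc 0 T, X t = X 0 + ∫ s in (0 : ℝ)..t, f s) {u : ℝ → Vec m}
    (hu : MemLp u 2 (volume.restrict (Icc 0 T)))
    (hσu : ∀ s ∈ Icc 0 T, matVec (σ' (segF τ X s)) (u s) = f s - b (segF τ X s)) :
    u ∈ controls h b σ' (X.restrict (Icc (-τ) T)) := by
  refine ⟨hu, fun t ht => ?_⟩
  have hsub : uIcc 0 t ⊆ Icc 0 T := by
    rw [uIcc_of_le ht.1]; exact Icc_subset_Icc_right ht.2
  have hseg : EqOn (seg h (X.restrict (Icc (-τ) T))) (segF τ X) (uIcc 0 t) := fun s hs =>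
    seg_restrict h X (hsub hs)
  have hdrift : ∫ s in (0 : ℝ)..t, b (seg h (X.restrict (Icc (-τ) T)) s) =
      ∫ s in (0 : ℝ)..t, b (segF τ X s) :=
    intervalIntegral.integral_congr fun s hs => congrArg b (hseg hs)
  have hnoise : ∫ s in (0 : ℝ)..t, matVec (σ' (seg h (X.restrict (Icc (-τ) T)) s)) (u s) =
      ∫ s in (0 : ℝ)..t, (f s - b (segF τ X s)) :=
    intervalIntegral.integral_congr fun s hs => by rw [hseg hs]; exact hσu s (hsub hs)
  rw [ev_restrict h X ⟨by linarith [ht.1], ht.2⟩, ev_restrict h X ⟨by linarith, ht.1.trans ht.2⟩,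
    hdrift, hnoise, intervalIntegral.integral_sub (hf.intervalIntegrable _ _)
      ((by fun_prop : Continuous fun s => b (segF τ X s)).intervalIntegrable _ _),
    add_assoc, add_sub_cancel, hX t ht]

theorem rate_restrict_le {d : ℕ} {τ T c G : ℝ} (hτ : 0 ≤ τ) (h : -τ ≤ T) (hT : 0 ≤ T)
    {b : Hist τ d → Vec d} {σ' : Hist τ d → Matrix (Fin d) (Fin d) ℝ}
    (hb : Continuous b) (hσ : Continuous σ') (hc : 0 < c) (hell : UnifElliptic σ' c)
    {X : C(ℝ, Vec d)} {f : ℝ → Vec d} (hf : Continuous f)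
    (hX : ∀ t ∈ Icc 0 T, X t = X 0 + ∫ s in (0 : ℝ)..t, f s)
    (hG : ∀ s ∈ Icc 0 T, ‖f s - b (segF τ X s)‖ ≤ G) :
    rate h b σ' (X.restrict (Icc (-τ) T)) ≤ ENNReal.ofReal (T * G ^ 2 / (2 * c)) := by
  set S : ℝ → Matrix (Fin d) (Fin d) ℝ := fun s => σ' (segF τ X s)
  set u : ℝ → Vec d := fun s => matVec ((S s)ᵀ * (S s * (S s)ᵀ)⁻¹) (f s - b (segF τ X s))
  have hS : Continuous S := by fun_prop
  have hu : Continuous u :=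
    (hS.matrix_transpose.matrix_mul ((hS.matrix_mul hS.matrix_transpose).matrix_inv fun s =>
      (posDef_mul_transpose_of_elliptic hc (hell _)).det_pos.ne')).matVec (by fun_prop)
  have hu_sq : ∀ s ∈ Icc 0 T, ‖u s‖ ^ 2 ≤ G ^ 2 / c := fun s hs => by
    have hfs := pow_le_pow_left₀ (norm_nonneg _) (hG s hs) 2
    rw [EuclideanSpace.real_norm_sq_eq] at hfs ⊢
    exact (sum_sq_transpose_mul_inv_mulVec_le hc (hell _) _).trans
      (div_le_div_of_nonneg_right hfs hc.le)
  have hmemLp : MemLp u 2 (volume.restrict (Icc 0 T)) :=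
    MemLp.of_bound hu.aestronglyMeasurable √(G ^ 2 / c)
      (ae_restrict_of_forall_mem measurableSet_Icc fun s hs => by
        simpa using Real.abs_le_sqrt (hu_sq s hs))
  have hcontrol : u ∈ controls h b σ' (X.restrict (Icc (-τ) T)) :=
    mem_controls_restrict hτ h hb hf hX hmemLp fun s _ => by
      rw [matVec_matVec, mul_transpose_mul_inv_of_elliptic hc (hell _), matVec_one]
  have henergy : ∫ s in (0 : ℝ)..T, ‖u s‖ ^ 2 ≤ T * (G ^ 2 / c) := by
    have := intervalIntegral.integral_mono_on hT
      ((hu.norm.pow 2).intervalIntegrable (μ := volume) _ _) intervalIntegrable_const hu_sq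
    rwa [intervalIntegral.integral_const, sub_zero, smul_eq_mul] at this
  calc rate h b σ' (X.restrict (Icc (-τ) T))
      ≤ ENNReal.ofReal (1 / 2 * ∫ s in (0 : ℝ)..T, ‖u s‖ ^ 2) := iInf₂_le u hcontrol
    _ ≤ ENNReal.ofReal (T * G ^ 2 / (2 * c)) := by
      gcongr
      calc 1 / 2 * ∫ s in (0 : ℝ)..T, ‖u s‖ ^ 2 ≤ 1 / 2 * (T * (G ^ 2 / c)) := by gcongr
        _ = T * G ^ 2 / (2 * c) := by field_simp

theorem exists_pos_mul_sq_le {A α : ℝ} (hA : 0 ≤ A) (hα : 0 < α) : ∃ μ > 0, A * μ ^ 2 ≤ α := by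
  refine ⟨√(α / (A + 1)), by positivity, ?_⟩
  rw [Real.sq_sqrt (by positivity), ← mul_div_assoc, div_le_iff₀ (by linarith)]
  nlinarith

section Periodic

variable {d : ℕ} {τ : ℝ} {x : C(ℝ, Vec d)}

theorem IsDDESol.integral_drift_segF_add {b : Hist τ d → Vec d} (hx : IsDDESol τ b x)
    (hb : Continuous b) {r t : ℝ} (hr : 0 ≤ r) (ht : 0 ≤ t) :
    ∫ s in (0 : ℝ)..t, b (segF τ x (s + r)) = x (t + r) - x r := by
  have hint : ∀ a a', IntervalIntegrable (fun s => b (segF τ x s)) volume a a' :=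
    (by fun_prop : Continuous _).intervalIntegrable
  rw [intervalIntegral.integral_comp_add_right (fun s => b (segF τ x s)), zero_add,
    ← intervalIntegral.integral_interval_sub_left (hint 0 _) (hint 0 r), hx (t + r) (by linarith),
    hx r hr]
  abel

theorem segF_add_nat_mul_of_periodic {p : ℝ} (hp : 0 ≤ p)
    (hper : ∀ t, -τ ≤ t → x (t + p) = x t) (n : ℕ) {t : ℝ} (ht : 0 ≤ t) :
    segF τ x (t + n * p) = segF τ x t := by
  have hiter : ∀ n : ℕ, ∀ s, -τ ≤ s → x (s + n * p) = x s := by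
    intro n
    induction n with
    | zero => simp
    | succ k ih =>
      intro s hs
      rw [Nat.cast_succ, add_one_mul, ← add_assoc, hper _ (by nlinarith [k.cast_nonneg (α := ℝ)]),
        ih s hs]
  ext q : 1
  simpa [segF, add_right_comm] using hiter n (t + q.1) (by linarith [q.2.1])

theorem exists_dist_segF_le_of_infDist_orbit_le {p μ : ℝ} (hp : 0 < p) {φ : Hist τ d}
    (hφ : infDist φ (orbit τ x p) ≤ μ) : ∃ r ∈ Icc 0 p, dist φ (segF τ x r) ≤ μ := by
  have hK : IsCompact (segF τ x '' Icc 0 p) := isCompact_Icc.image (continuous_segF τ x)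
  obtain ⟨_, ⟨r, hr, rfl⟩, hdist⟩ := hK.exists_infDist_eq_dist ⟨_, 0, ⟨le_rfl, hp.le⟩, rfl⟩ φ
  exact ⟨r, hr, hdist ▸ (infDist_le_infDist_of_subset (image_mono Ico_subset_Icc_self)
    ⟨_, 0, ⟨le_rfl, hp⟩, rfl⟩).trans hφ⟩

end Periodic

def cutoff (t : ℝ) : ℝ := Real.smoothTransition (1 - t)

theorem contDiff_cutoff : ContDiff ℝ 1 cutoff :=
  Real.smoothTransition.contDiff.comp (contDiff_const.sub contDiff_id)

@[fun_prop]
theorem continuous_cutoff : Continuous cutoff :=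
  contDiff_cutoff.continuous

@[fun_prop]
theorem continuous_deriv_cutoff : Continuous (deriv cutoff) :=
  contDiff_cutoff.continuous_deriv le_rfl

theorem cutoff_of_nonpos {t : ℝ} (ht : t ≤ 0) : cutoff t = 1 :=
  Real.smoothTransition.one_of_one_le (by linarith)

theorem cutoff_of_one_le {t : ℝ} (ht : 1 ≤ t) : cutoff t = 0 :=
  Real.smoothTransition.zero_of_nonpos (by linarith)

theorem norm_cutoff_le_one (t : ℝ) : ‖cutoff t‖ ≤ 1 := by
  rw [cutoff, Real.norm_of_nonneg (Real.smoothTransition.nonneg _)]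
  exact Real.smoothTransition.le_one _

section ConnectingPath

variable {d : ℕ} {τ : ℝ} (hτ : -τ ≤ 0) (φ : Hist τ d) (x : C(ℝ, Vec d)) (r : ℝ)

def connectingPath : C(ℝ, Vec d) where
  toFun t := x (t + r) + cutoff t • IccExtend hτ (φ - segF τ x r) t
  continuous_toFun := by
    have := continuous_IccExtend_iff (h := hτ) |>.2 (φ - segF τ x r).continuous
    fun_prop

theorem segF_connectingPath_zero : segF τ (connectingPath hτ φ x r) 0 = φ := by
  ext q : 1
  simp [segF, connectingPath, cutoff_of_nonpos q.2.2, IccExtend_val, add_comm r]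

theorem segF_connectingPath_of_le {t : ℝ} (ht : 1 + τ ≤ t) :
    segF τ (connectingPath hτ φ x r) t = segF τ x (t + r) := by
  ext q : 1
  simp [segF, connectingPath, cutoff_of_one_le (show 1 ≤ t + q.1 by linarith [q.2.1]),
    add_right_comm]

theorem connectingPath_eq_integral {b : Hist τ d → Vec d} (hx : IsDDESol τ b x)
    (hb : Continuous b) (hr : 0 ≤ r) {t : ℝ} (ht : 0 ≤ t) :
    connectingPath hτ φ x r t = connectingPath hτ φ x r 0 + ∫ s in (0 : ℝ)..t,
      (b (segF τ x (s + r)) + deriv cutoff s • IccExtend hτ (φ - segF τ x r) 0) := by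
  have hcut : ∫ s in (0 : ℝ)..t, deriv cutoff s = cutoff t - cutoff 0 :=
    intervalIntegral.integral_deriv_eq_sub (fun s _ => contDiff_cutoff.differentiable one_ne_zero s)
      (continuous_deriv_cutoff.intervalIntegrable _ _)
  have hdrift : IntervalIntegrable (fun s => b (segF τ x (s + r))) volume 0 t :=
    (by fun_prop : Continuous _).intervalIntegrable _ _
  have hfade : IntervalIntegrable (fun s => deriv cutoff s • IccExtend hτ (φ - segF τ x r) 0)
      volume 0 t :=
    (by fun_prop : Continuous _).intervalIntegrable _ _
  rw [intervalIntegral.integral_add hdrift hfade,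
    intervalIntegral.integral_smul_const, hcut, hx.integral_drift_segF_add hb hr ht]
  simp only [connectingPath, ContinuousMap.coe_mk, IccExtend_of_right_le hτ _ ht,
    IccExtend_of_right_le hτ _ le_rfl, cutoff_of_nonpos le_rfl, zero_add]
  module

theorem norm_drift_connectingPath_sub_le {m : ℕ} {b : Hist τ d → Vec d}
    {σ' : Hist τ d → Matrix (Fin d) (Fin m) ℝ} {κ₁ : ℝ} (hl : LipCoeff b σ' κ₁) (s : ℝ) :
    ‖b (segF τ x (s + r)) + deriv cutoff s • IccExtend hτ (φ - segF τ x r) 0 -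
        b (segF τ (connectingPath hτ φ x r) s)‖ ≤ (√κ₁ + |deriv cutoff s|) * ‖φ - segF τ x r‖ := by
  have hoffset : ∀ t, ‖IccExtend hτ (φ - segF τ x r) t‖ ≤ ‖φ - segF τ x r‖ := fun t =>
    (φ - segF τ x r).norm_coe_le_norm _
  have hpath : ‖segF τ x (s + r) - segF τ (connectingPath hτ φ x r) s‖ ≤ ‖φ - segF τ x r‖ := by
    refine (ContinuousMap.norm_le _ (norm_nonneg _)).2 fun q => ?_
    have hq : (segF τ x (s + r) - segF τ (connectingPath hτ φ x r) s) q =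
        -(cutoff (s + q) • IccExtend hτ (φ - segF τ x r) (s + q)) := by
      simp [segF, connectingPath, add_right_comm s r]
    rw [hq, norm_neg, norm_smul]
    exact (mul_le_of_le_one_left (norm_nonneg _) (norm_cutoff_le_one _)).trans (hoffset _)
  calc _ = ‖(b (segF τ x (s + r)) - b (segF τ (connectingPath hτ φ x r) s)) +
        deriv cutoff s • IccExtend hτ (φ - segF τ x r) 0‖ := by abel_nf
    _ ≤ √κ₁ * ‖φ - segF τ x r‖ + |deriv cutoff s| * ‖φ - segF τ x r‖ := by
      refine norm_add_le_of_le ((hl.norm_drift_sub_le _ _).trans (by gcongr)) ?_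
      rw [norm_smul, Real.norm_eq_abs]
      gcongr
      exact hoffset 0
    _ = _ := by ring

end ConnectingPath

theorem stmt_9_general {d : ℕ} {τ : ℝ} (hτ : 0 < τ)
    (b : Hist τ d → Vec d) (σ' : Hist τ d → Matrix (Fin d) (Fin d) ℝ)
    {κ₁ : ℝ} (hlip : LipCoeff b σ' κ₁)
    {c : ℝ} (hc : 0 < c) (hell : UnifElliptic σ' c)
    (xs : C(ℝ, Vec d)) (p : ℝ) (hxs : IsPeriodicSol τ b xs p)
    (α : ℝ) (hα : 0 < α) :
    ∃ μ : ℝ, 0 < μ ∧ ∃ T₁ : ℝ, 0 < T₁ ∧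
      ∀ φ : Hist τ d, infDist φ (orbit τ xs p) ≤ μ →
        ∀ ψ ∈ orbit τ xs p,
          ∃ T : ℝ, 0 < T ∧ T ≤ T₁ ∧ ∃ (h : -τ ≤ T) (x : Traj τ T d),
            seg h x 0 = φ ∧ seg h x T = ψ ∧ rate h b σ' x ≤ ENNReal.ofReal α := by
  obtain ⟨hdde, hp, hper⟩ := hxs
  have hb := hlip.continuous_drift
  obtain ⟨n, hn⟩ : ∃ n : ℕ, 1 + τ + p ≤ n * p := by
    obtain ⟨n, hn⟩ := exists_nat_ge ((1 + τ + p) / p)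
    exact ⟨n, (div_le_iff₀ hp).1 hn⟩
  set T₁ := n * p + p
  obtain ⟨K, hK⟩ := (isCompact_Icc (a := 0) (b := T₁)).exists_bound_of_continuousOn
    continuous_deriv_cutoff.continuousOn
  have hK₀ : 0 ≤ K := (norm_nonneg _).trans (hK 0 ⟨le_rfl, by positivity⟩)
  obtain ⟨μ, hμ, hμα⟩ :=
    exists_pos_mul_sq_le (A := T₁ * (√κ₁ + K) ^ 2 / (2 * c)) (by positivity) hα
  refine ⟨μ, hμ, T₁, by positivity, fun φ hφ ψ hψ => ?_⟩
  obtain ⟨t₀, ht₀, rfl⟩ := hψ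
  obtain ⟨r, hr, hφr⟩ := exists_dist_segF_le_of_infDist_orbit_le hp hφ
  have hτ₀ : -τ ≤ 0 := by linarith
  set X := connectingPath hτ₀ φ xs r
  set T := t₀ - r + n * p
  have hT : 1 + τ ≤ T ∧ T ≤ T₁ := ⟨by linarith [ht₀.1, hr.2], by linarith [ht₀.2, hr.1]⟩
  refine ⟨T, by linarith, hT.2, by linarith, X.restrict (Icc (-τ) T), ?_, ?_, ?_⟩
  · rw [seg_restrict _ _ ⟨le_rfl, by linarith⟩, segF_connectingPath_zero]
  · rw [seg_restrict _ _ ⟨by linarith, le_rfl⟩, segF_connectingPath_of_le _ _ _ _ hT.1,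
      show T + r = t₀ + n * p by ring, segF_add_nat_mul_of_periodic hp.le hper n ht₀.1]
  have hforce : ∀ s ∈ Icc 0 T, ‖b (segF τ xs (s + r)) +
      deriv cutoff s • IccExtend hτ₀ (φ - segF τ xs r) 0 - b (segF τ X s)‖ ≤ (√κ₁ + K) * μ :=
    fun s hs => (norm_drift_connectingPath_sub_le _ _ _ _ hlip s).trans <|
      mul_le_mul (by gcongr; exact hK s ⟨hs.1, hs.2.trans hT.2⟩) (by rwa [← dist_eq_norm])
        (norm_nonneg _) (by positivity)
  calc rate _ b σ' (X.restrict (Icc (-τ) T))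
      ≤ ENNReal.ofReal (T * ((√κ₁ + K) * μ) ^ 2 / (2 * c)) :=
        rate_restrict_le hτ.le _ (by linarith) hb hlip.continuous_diffusion hc hell (by fun_prop)
          (fun t ht => connectingPath_eq_integral _ _ _ _ hdde hb hr.1 ht.1) hforce
    _ ≤ ENNReal.ofReal α := by
      refine ENNReal.ofReal_le_ofReal ?_
      calc T * ((√κ₁ + K) * μ) ^ 2 / (2 * c) = T * (√κ₁ + K) ^ 2 / (2 * c) * μ ^ 2 := by ring
        _ ≤ T₁ * (√κ₁ + K) ^ 2 / (2 * c) * μ ^ 2 := by gcongr; exact hT.2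
        _ ≤ α := hμα

/-- Lemma 6.1: paths of small energy connecting a neighborhood of the orbit
to the orbit, in bounded time. -/
theorem stmt_9 {d : ℕ} (hd : 0 < d) {τ : ℝ} (hτ : 0 < τ)
    (b : Hist τ d → Vec d) (σ' : Hist τ d → Matrix (Fin d) (Fin d) ℝ)
    {κ₁ : ℝ} (hκ₁ : 0 < κ₁) (hlip : LipCoeff b σ' κ₁)
    {c : ℝ} (hc : 0 < c) (hell : UnifElliptic σ' c)
    (xs : C(ℝ, Vec d)) (p : ℝ) (hxs : IsPeriodicSol τ b xs p)
    (α : ℝ) (hα : 0 < α) :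
    ∃ μ : ℝ, 0 < μ ∧ ∃ T₁ : ℝ, 0 < T₁ ∧
      ∀ φ : Hist τ d, infDist φ (orbit τ xs p) ≤ μ →
        ∀ ψ ∈ orbit τ xs p,
          ∃ T : ℝ, 0 < T ∧ T ≤ T₁ ∧ ∃ (h : -τ ≤ T) (x : Traj τ T d),
            seg h x 0 = φ ∧ seg h x T = ψ ∧ rate h b σ' x ≤ ENNReal.ofReal α :=
  stmt_9_general hτ b σ' hlip hc hell xs p hxs α hα
end
end
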